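/- Let Q be a BZ triangle, let Q_min be the unique BZ triangle with ∂(Q_min) = ∂(Q) having some corner entry equal to 0, and let m be the minimum of the six hexagon entries of Q_min. Then {Q′ ∈ BZ₃ : ∂(Q′) = ∂(Q)} = {Q_min + ℓ·v : ℓ ∈ ℕ, 0 ≤ ℓ ≤ m}; in particular this set is finite with exactly m+1 elements. -/

import Mathlib

/-- The hexagon relations on a point of `ℤ⁹` with coordinates
`(a₁,b₁,c₁,a₂,a₃,b₂,b₃,c₂,c₃)` (indices `0,…,8`). -/
def hex (x : Fin 9 → ℤ) : Prop :=
  x 3 + x 4 = x 6 + x 7 ∧ x 5 + x 6 = x 8 + x 3 ∧ x 7 + x 8 = x 4 + x 5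

/-- A BZ triangle: a point of `ℕ⁹` (all entries nonnegative) satisfying the
hexagon relations. -/
def isBZ (x : Fin 9 → ℤ) : Prop := (∀ i, 0 ≤ x i) ∧ hex x

/-- The boundary map `∂ : ℤ⁹ → (ℤ²)³`. -/
def bd (x : Fin 9 → ℤ) : Fin 3 → ℤ × ℤ :=
  ![(x 0 + x 3, x 4 + x 1), (x 1 + x 5, x 6 + x 2), (x 2 + x 7, x 8 + x 0)]

/-- The vector `v` with all corner entries `1` and all hexagon entries `-1`. -/
def vtri : Fin 9 → ℤ := ![1, 1, 1, -1, -1, -1, -1, -1, -1]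

/-!
On points satisfying the hexagon relations, the kernel of `∂` is spanned by `v`: if `∂ x = ∂ y`
then each hexagon entry of `d = x - y` is minus an adjacent corner entry, and the three hexagon
relations for `d` become `a₁ + b₁ = 2c₁`, `b₁ + c₁ = 2a₁`, `c₁ + a₁ = 2b₁` on its corners, forcing
`d = a₁(d) • v`. Hence the fiber through `Q_min` is `{Q_min + ℓ • v : ℓ ∈ ℤ} ∩ ℕ⁹`; the zero corner
of `Q_min` forces `ℓ ≥ 0` and its hexagon entries force `ℓ ≤ m`.
-/

def hexMin (x : Fin 9 → ℤ) : ℤ :=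
  min (x 3) (min (x 4) (min (x 5) (min (x 6) (min (x 7) (x 8)))))

lemma hexMin_nonneg {x : Fin 9 → ℤ} (hx : ∀ i, 0 ≤ x i) : 0 ≤ hexMin x := by
  simp only [hexMin, le_min_iff]
  exact ⟨hx 3, hx 4, hx 5, hx 6, hx 7, hx 8⟩

lemma hex_add_smul_vtri {x : Fin 9 → ℤ} (hx : hex x) (ℓ : ℤ) : hex (x + ℓ • vtri) := by
  obtain ⟨h₁, h₂, h₃⟩ := hx
  simp [hex, vtri]
  omega

lemma bd_add_smul_vtri (x : Fin 9 → ℤ) (ℓ : ℤ) : bd (x + ℓ • vtri) = bd x := by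
  funext j
  fin_cases j <;> simp [bd, vtri] <;> omega

lemma eq_add_smul_vtri_of_bd_eq {x y : Fin 9 → ℤ} (hx : hex x) (hy : hex y)
    (h : bd x = bd y) : x = y + (x 0 - y 0) • vtri := by
  have e₀ := congrFun h 0
  have e₁ := congrFun h 1
  have e₂ := congrFun h 2
  simp only [bd, Matrix.cons_val, Prod.mk.injEq] at e₀ e₁ e₂
  obtain ⟨hx₁, hx₂, hx₃⟩ := hx
  obtain ⟨hy₁, hy₂, hy₃⟩ := hy
  funext i
  fin_cases i <;> simp [vtri] <;> omega

lemma add_smul_vtri_injective (x : Fin 9 → ℤ) :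
    Function.Injective fun ℓ : ℤ => x + ℓ • vtri := by
  intro a b hab
  simpa [vtri] using congrFun hab 0

lemma nonneg_add_smul_vtri_iff {x : Fin 9 → ℤ} (hx : ∀ i, 0 ≤ x i)
    (hcorner : x 0 = 0 ∨ x 1 = 0 ∨ x 2 = 0) (ℓ : ℤ) :
    (∀ i, 0 ≤ (x + ℓ • vtri) i) ↔ 0 ≤ ℓ ∧ ℓ ≤ hexMin x := by
  have := hx 0; have := hx 1; have := hx 2
  simp only [Fin.forall_fin_succ, hexMin, le_min_iff]
  simp [vtri]
  omega

lemma setOf_isBZ_bd_eq {y : Fin 9 → ℤ} (hy : isBZ y) (hcorner : y 0 = 0 ∨ y 1 = 0 ∨ y 2 = 0) :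
    {x : Fin 9 → ℤ | isBZ x ∧ bd x = bd y} =
      (fun ℓ : ℤ => y + ℓ • vtri) '' Set.Icc 0 (hexMin y) := by
  ext x
  constructor
  · rintro ⟨⟨hx_nonneg, hx_hex⟩, hxy⟩
    have hx := eq_add_smul_vtri_of_bd_eq hx_hex hy.2 hxy
    exact ⟨x 0 - y 0, (nonneg_add_smul_vtri_iff hy.1 hcorner _).1 (hx ▸ hx_nonneg), hx.symm⟩
  · rintro ⟨ℓ, hℓ, rfl⟩
    exact ⟨⟨(nonneg_add_smul_vtri_iff hy.1 hcorner ℓ).2 hℓ, hex_add_smul_vtri hy.2 ℓ⟩,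
      bd_add_smul_vtri y ℓ⟩

theorem stmt_3 (Q Qmin : Fin 9 → ℤ) (hQmin : isBZ Qmin)
    (hbd : bd Qmin = bd Q)
    (hcorner : Qmin 0 = 0 ∨ Qmin 1 = 0 ∨ Qmin 2 = 0)
    (m : ℤ)
    (hm : m = min (Qmin 3) (min (Qmin 4) (min (Qmin 5) (min (Qmin 6)
      (min (Qmin 7) (Qmin 8)))))) :
    {Q' : Fin 9 → ℤ | isBZ Q' ∧ bd Q' = bd Q} =
      {Q' : Fin 9 → ℤ | ∃ ℓ : ℤ, 0 ≤ ℓ ∧ ℓ ≤ m ∧ Q' = Qmin + ℓ • vtri} ∧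
    {Q' : Fin 9 → ℤ | isBZ Q' ∧ bd Q' = bd Q}.Finite ∧
    ({Q' : Fin 9 → ℤ | isBZ Q' ∧ bd Q' = bd Q}.ncard : ℤ) = m + 1 := by
  replace hm : hexMin Qmin = m := hm.symm
  have hfiber := setOf_isBZ_bd_eq hQmin hcorner
  rw [hm, hbd] at hfiber
  have himage : {Q' : Fin 9 → ℤ | ∃ ℓ : ℤ, 0 ≤ ℓ ∧ ℓ ≤ m ∧ Q' = Qmin + ℓ • vtri} =
      (fun ℓ : ℤ => Qmin + ℓ • vtri) '' Set.Icc 0 m := by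
    ext
    simp [eq_comm, and_assoc]
  have hm₀ : 0 ≤ m := hm ▸ hexMin_nonneg hQmin.1
  refine ⟨hfiber.trans himage.symm, hfiber ▸ (Set.finite_Icc _ _).image _, ?_⟩
  rw [hfiber, Set.ncard_image_of_injective _ (add_smul_vtri_injective Qmin),
    ← Finset.coe_Icc, Set.ncard_coe_finset, Int.card_Icc, sub_zero, Int.toNat_of_nonneg (by omega)]
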